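/- Let q be a prime power such that either F_q has characteristic 2 or q ≡ 1 (mod 4), let m be a positive integer coprime to q, and let R = F_q[Y]/(Y^m − 1). Let C_0 ⊆ R^{2ℓ} be a Hermitian self-dual linear code over R generated as an R-module by vectors r_1, …, r_k. Let c ∈ R satisfy c · conj(c) = −1, let x ∈ R^{2ℓ} satisfy ⟨x,x⟩ = −1, and set y_i = −⟨r_i, x⟩ for 1 ≤ i ≤ k. Then the R-submodule C of R^{2ℓ+2} generated by the vector (1, 0, x) together with the vectors (y_i, c·y_i, r_i) for 1 ≤ i ≤ k is a Hermitian self-dual linear code over R of length 2ℓ+2. -/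

import Mathlib

open Polynomial

noncomputable section

/-- The ring `R = F_q[Y]/(Y^m − 1)`. -/
abbrev Rq (F : Type) [Field F] (m : ℕ) := AdjoinRoot ((X : F[X]) ^ m - 1)

lemma root_pow_eq_one (F : Type) [Field F] (m : ℕ) :
    (AdjoinRoot.root ((X : F[X]) ^ m - 1)) ^ m = 1 := by
  have h : (aeval (AdjoinRoot.root ((X : F[X]) ^ m - 1)) ((X : F[X]) ^ m - 1)) = 0 := by
    rw [AdjoinRoot.aeval_eq, AdjoinRoot.mk_self]
  simp only [map_sub, map_pow, aeval_X, map_one, sub_eq_zero] at h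
  exact h

/-- Conjugation on `R`: the `F`-algebra map determined by `Y ↦ Y^{m−1} (= Y⁻¹)`. -/
noncomputable def conjR (F : Type) [Field F] (m : ℕ) : Rq F m →ₐ[F] Rq F m :=
  AdjoinRoot.liftAlgHom _ (Algebra.ofId F _) ((AdjoinRoot.root ((X : F[X]) ^ m - 1)) ^ (m - 1)) (by
    have h : aeval ((AdjoinRoot.root ((X : F[X]) ^ m - 1)) ^ (m - 1)) ((X : F[X]) ^ m - 1) = 0 := by
      simp only [map_sub, map_pow, aeval_X, map_one, sub_eq_zero, ← pow_mul]
      rw [mul_comm, pow_mul, root_pow_eq_one, one_pow]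
    exact h)

/-- The Hermitian inner product `⟨x,y⟩ = Σ_j x_j ⬝ conj(y_j)` on `R^n`. -/
def herm (F : Type) [Field F] (m : ℕ) {n : ℕ} (x y : Fin n → Rq F m) : Rq F m :=
  ∑ j, x j * conjR F m (y j)

/-- A linear code `C ⊆ R^n` is Hermitian self-dual if `C = C^⊥`, i.e. membership in `C`
coincides with orthogonality to all of `C`. -/
def IsHermSelfDual (F : Type) [Field F] (m : ℕ) {n : ℕ}
    (C : Submodule (Rq F m) (Fin n → Rq F m)) : Prop :=
  ∀ y, y ∈ C ↔ ∀ x ∈ C, herm F m x y = 0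

/-!
The construction works over any commutative ring `R` with an involution `σ`; the Hermitian
product is the sesquilinear form `hermForm σ`, so that `C^⊥ = C.orthogonalBilin (hermForm σ)`.
With `e = (1, 0)` and `d = (1, c)` one has `⟨e, e⟩ = ⟨e, d⟩ = 1` and `⟨d, d⟩ = 1 + c σ(c) = 0`,
which together with `⟨x, x⟩ = -1` and `y_i = -⟨r_i, x⟩` makes the generators `(e, x)` and
`(y_i d, r_i)` pairwise orthogonal, so `C ⊆ C^⊥`. Conversely let `w = (w₁, z) ∈ C^⊥`. Since `c`
is a unit, `w₁ = α e + γ d`, and orthogonality to `(y_i d, r_i)` says exactly that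
`z - α x ⊥ C₀`, so `z - α x = ∑ b_i r_i`. Then `w - α (e, x) - ∑ b_i (y_i d, r_i)` is
`(γ - ∑ b_i y_i) (d, 0)`, which lies in `C^⊥`; pairing it with `(e, x)` gives
`σ (γ - ∑ b_i y_i) = 0`, hence `w ∈ C`.
-/

open Submodule Set

section OrthogonalBilin

variable {R R₁ M M₁ : Type*} [CommSemiring R] [CommSemiring R₁] [AddCommMonoid M] [Module R M]
  [AddCommMonoid M₁] [Module R₁ M₁] {I₁ I₂ : R₁ →+* R} {B : M₁ →ₛₗ[I₁] M₁ →ₛₗ[I₂] M}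

theorem Submodule.mem_orthogonalBilin_span_iff {S : Set M₁} {y : M₁} :
    y ∈ (span R₁ S).orthogonalBilin B ↔ ∀ x ∈ S, B x y = 0 := by
  refine ⟨fun h x hx => h x (subset_span hx), fun h x hx => ?_⟩
  have : span R₁ S ≤ LinearMap.ker (B.flip y) := span_le.2 h
  exact this hx

theorem Submodule.span_le_orthogonalBilin_span {S : Set M₁}
    (h : ∀ x ∈ S, ∀ y ∈ S, B x y = 0) : span R₁ S ≤ (span R₁ S).orthogonalBilin B :=
  span_le.2 fun y hy => mem_orthogonalBilin_span_iff.2 fun x hx => h x hx y hy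

end OrthogonalBilin

def Fin.appendLinearEquiv (R M : Type*) [Semiring R] [AddCommMonoid M] [Module R M] (a b : ℕ) :
    ((Fin a → M) × (Fin b → M)) ≃ₗ[R] (Fin (a + b) → M) :=
  { Fin.appendEquiv a b with
    map_add' := fun p q => by
      ext i
      refine Fin.addCases (fun i => ?_) (fun i => ?_) i <;> simp
    map_smul' := fun t p => by
      ext i
      refine Fin.addCases (fun i => ?_) (fun i => ?_) i <;> simp }

@[simp]
theorem Fin.appendLinearEquiv_apply (R : Type*) {M : Type*} [Semiring R] [AddCommMonoid M]
    [Module R M] {a b : ℕ} (p : (Fin a → M) × (Fin b → M)) :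
    Fin.appendLinearEquiv R M a b p = Fin.append p.1 p.2 := rfl

section HermForm

variable {R : Type*} [CommSemiring R] (σ : R →+* R) {ι : Type*} [Fintype ι]

def hermForm : (ι → R) →ₗ[R] (ι → R) →ₛₗ[σ] R :=
  LinearMap.mk₂'ₛₗ (RingHom.id R) σ (fun x y => ∑ j, x j * σ (y j))
    (by simp [add_mul, Finset.sum_add_distrib]) (by simp [Finset.mul_sum, mul_assoc])
    (by simp [mul_add, Finset.sum_add_distrib]) (by simp [Finset.mul_sum, mul_left_comm])

theorem hermForm_apply (x y : ι → R) : hermForm σ x y = ∑ j, x j * σ (y j) := rfl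

theorem hermForm_append {a b : ℕ} (u v : Fin a → R) (x y : Fin b → R) :
    hermForm σ (Fin.append u x) (Fin.append v y) = hermForm σ u v + hermForm σ x y := by
  simp [hermForm_apply, Fin.sum_univ_add]

theorem hermForm_vec₂ (a b a' b' : R) :
    hermForm σ ![a, b] ![a', b'] = a * σ a' + b * σ b' := by
  simp [hermForm_apply, Fin.sum_univ_two]

variable {σ}

theorem hermForm_swap (hσ : Function.Involutive σ) (x y : ι → R) :
    σ (hermForm σ x y) = hermForm σ y x := by
  simp only [hermForm_apply, map_sum, map_mul, hσ _, mul_comm]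

end HermForm

section BuildUp

variable {R : Type*} [CommRing R] {σ : R →+* R} {c : R}

theorem vec₂_eq_smul_add_smul (hc : c * σ c = -1) (w : Fin 2 → R) :
    w = (w 0 + σ c * w 1) • ![1, 0] + (-(σ c * w 1)) • ![1, c] := by
  ext i
  fin_cases i
  · simp
  · simp only [Fin.mk_one, Pi.add_apply, Pi.smul_apply, Matrix.cons_val_one,
      Matrix.cons_val_zero, smul_eq_mul]
    linear_combination w 1 * hc

variable {ι : Type*} {n : ℕ}

def buildUpGenerators (c : R) (x : Fin n → R) (r : ι → Fin n → R) (y : ι → R) :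
    Set (Fin (2 + n) → R) :=
  {Fin.append ![1, 0] x} ∪ range fun i => Fin.append ![y i, c * y i] (r i)

variable {r : ι → Fin n → R} {x : Fin n → R} {y : ι → R}

theorem append_eq_smul_add_sum_smul_add_smul [Fintype ι] {w₁ : Fin 2 → R} {z : Fin n → R}
    {α γ : R} {b : ι → R} (hw₁ : w₁ = α • ![1, 0] + γ • ![1, c])
    (hb : ∑ i, b i • r i = z - α • x) :
    Fin.append w₁ z = α • Fin.append ![1, 0] x + ∑ i, b i • Fin.append (y i • ![1, c]) (r i) +
      (γ - ∑ i, b i * y i) • Fin.append ![1, c] 0 := by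
  have hE : ∀ u v, Fin.append u v = Fin.appendLinearEquiv R R 2 n (u, v) := fun _ _ => rfl
  simp only [hE, ← map_smul, ← map_sum, ← map_add]
  congr 1
  ext : 1
  · simp only [hw₁, Prod.fst_add, Prod.smul_fst, Prod.fst_sum, smul_smul, ← Finset.sum_smul]
    module
  · simp only [Prod.snd_add, Prod.smul_snd, Prod.snd_sum, smul_zero, hb]
    abel

theorem hermForm_eq_zero_of_mem_buildUpGenerators (hσ : Function.Involutive σ)
    (hC₀ : span R (range r) ≤ (span R (range r)).orthogonalBilin (hermForm σ))
    (hc : c * σ c = -1) (hx : hermForm σ x x = -1) (hy : ∀ i, hermForm σ (r i) x = -y i) :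
    ∀ g ∈ buildUpGenerators c x r y, ∀ g' ∈ buildUpGenerators c x r y, hermForm σ g g' = 0 := by
  have hrr : ∀ i j, hermForm σ (r i) (r j) = 0 := fun i j =>
    hC₀ (subset_span ⟨j, rfl⟩) (r i) (subset_span ⟨i, rfl⟩)
  have hxr : ∀ i, hermForm σ x (r i) = -σ (y i) := fun i => by
    rw [← hermForm_swap hσ, hy, map_neg]
  rintro _ (rfl | ⟨i, rfl⟩) _ (rfl | ⟨j, rfl⟩) <;>
    simp only [hermForm_append, hermForm_vec₂, map_one, map_zero, map_mul, hx, hy, hxr, hrr]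
  · ring
  · ring
  · ring
  · linear_combination y i * σ (y j) * hc

theorem orthogonalBilin_span_buildUpGenerators_le [Fintype ι] (hσ : Function.Involutive σ)
    (hC₀ : (span R (range r)).orthogonalBilin (hermForm σ) = span R (range r))
    (hc : c * σ c = -1) (hx : hermForm σ x x = -1) (hy : ∀ i, hermForm σ (r i) x = -y i) :
    (span R (buildUpGenerators c x r y)).orthogonalBilin (hermForm σ) ≤
      span R (buildUpGenerators c x r y) := by
  have hg₀ : Fin.append ![1, 0] x ∈ buildUpGenerators c x r y := Or.inl rfl
  have hg : ∀ i, Fin.append (y i • ![1, c]) (r i) ∈ buildUpGenerators c x r y :=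
    fun i => Or.inr ⟨i, by simp [mul_comm]⟩
  have hiso := span_le_orthogonalBilin_span
    (hermForm_eq_zero_of_mem_buildUpGenerators hσ hC₀.ge hc hx hy)
  intro w hw
  obtain ⟨⟨w₁, z⟩, rfl⟩ := (Fin.appendLinearEquiv R R 2 n).surjective w
  rw [Fin.appendLinearEquiv_apply] at hw ⊢
  obtain ⟨α, γ, hw₁⟩ : ∃ α γ : R, w₁ = α • ![1, 0] + γ • ![1, c] :=
    ⟨_, _, vec₂_eq_smul_add_smul hc w₁⟩
  have hp : z - α • x ∈ span R (range r) := by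
    rw [← hC₀, mem_orthogonalBilin_span_iff]
    rintro _ ⟨i, rfl⟩
    have hi := mem_orthogonalBilin_span_iff.1 hw _ (hg i)
    simp only [hw₁, hermForm_append, map_add, map_smulₛₗ, LinearMap.smul_apply, hermForm_vec₂,
      smul_eq_mul, RingHom.id_apply, map_one, map_zero] at hi
    simp only [map_sub, map_smulₛₗ, smul_eq_mul, hy]
    linear_combination hi - σ γ * y i * hc
  obtain ⟨b, hb⟩ := (mem_span_range_iff_exists_fun R).1 hp
  set v := α • Fin.append ![1, 0] x + ∑ i, b i • Fin.append (y i • ![1, c]) (r i)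
  have hv : v ∈ span R (buildUpGenerators c x r y) :=
    add_mem (smul_mem _ _ (subset_span hg₀))
      (sum_mem fun i _ => smul_mem _ _ (subset_span (hg i)))
  have hdiff : Fin.append w₁ z - v = (γ - ∑ i, b i * y i) • Fin.append ![1, c] 0 :=
    sub_eq_iff_eq_add'.2 (append_eq_smul_add_sum_smul_add_smul hw₁ hb)
  have hγ : γ - ∑ i, b i * y i = 0 := by
    have h₀ := mem_orthogonalBilin_span_iff.1 (hdiff ▸ sub_mem hw (hiso hv)) _ hg₀
    simp only [map_smulₛₗ, hermForm_append, hermForm_vec₂, map_one, map_zero] at h₀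
    exact hσ.injective (by simpa using h₀)
  rw [hγ, zero_smul, sub_eq_zero] at hdiff
  exact hdiff ▸ hv

theorem orthogonalBilin_span_buildUpGenerators [Fintype ι] (hσ : Function.Involutive σ)
    (hC₀ : (span R (range r)).orthogonalBilin (hermForm σ) = span R (range r))
    (hc : c * σ c = -1) (hx : hermForm σ x x = -1) (hy : ∀ i, hermForm σ (r i) x = -y i) :
    (span R (buildUpGenerators c x r y)).orthogonalBilin (hermForm σ) = span R (buildUpGenerators c x r y) :=
  le_antisymm (orthogonalBilin_span_buildUpGenerators_le hσ hC₀ hc hx hy)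
    (span_le_orthogonalBilin_span (hermForm_eq_zero_of_mem_buildUpGenerators hσ hC₀.ge hc hx hy))

end BuildUp

theorem pow_pred_pow_pred_of_pow_eq_one {M : Type*} [CommMonoid M] {a : M} {m : ℕ}
    (hm : 0 < m) (ha : a ^ m = 1) : (a ^ (m - 1)) ^ (m - 1) = a := by
  obtain ⟨k, rfl⟩ := Nat.exists_eq_add_of_lt hm
  have hinv : a ^ k * a = 1 := by rw [← pow_succ]; simpa using ha
  simp only [zero_add, Nat.add_sub_cancel]
  calc (a ^ k) ^ k = (a ^ k) ^ k * (a ^ k * a) := by rw [hinv, mul_one]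
    _ = (a ^ k * a) ^ k * a := by rw [mul_pow, mul_assoc]
    _ = a := by rw [hinv, one_pow, one_mul]

theorem conjR_root (F : Type) [Field F] (m : ℕ) :
    conjR F m (AdjoinRoot.root ((X : F[X]) ^ m - 1)) =
      AdjoinRoot.root ((X : F[X]) ^ m - 1) ^ (m - 1) :=
  AdjoinRoot.liftAlgHom_root _ _ _ _

theorem conjR_involutive (F : Type) [Field F] {m : ℕ} (hm : 0 < m) :
    Function.Involutive (conjR F m) := by
  have hcomp : (conjR F m).comp (conjR F m) = AlgHom.id F (Rq F m) :=
    AdjoinRoot.algHom_ext <| by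
      rw [AlgHom.comp_apply, conjR_root, map_pow, conjR_root,
        pow_pred_pow_pred_of_pow_eq_one hm (root_pow_eq_one F m), AlgHom.id_apply]
  exact fun a => AlgHom.congr_fun hcomp a

theorem isHermSelfDual_iff (F : Type) [Field F] (m : ℕ) {n : ℕ}
    (C : Submodule (Rq F m) (Fin n → Rq F m)) :
    IsHermSelfDual F m C ↔ C.orthogonalBilin (hermForm (conjR F m : Rq F m →+* Rq F m)) = C := by
  rw [eq_comm, SetLike.ext_iff]
  rfl

theorem statement2_general (F : Type) [Field F]
    (m : ℕ) (hm : 0 < m)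
    (ℓ k : ℕ) (r : Fin k → (Fin (2 * ℓ) → Rq F m))
    (C₀ : Submodule (Rq F m) (Fin (2 * ℓ) → Rq F m))
    (hC₀span : C₀ = Submodule.span (Rq F m) (Set.range r))
    (hC₀sd : IsHermSelfDual F m C₀)
    (c : Rq F m) (hc : c * conjR F m c = -1)
    (x : Fin (2 * ℓ) → Rq F m) (hx : herm F m x x = -1)
    (y : Fin k → Rq F m) (hy : ∀ i, y i = - herm F m (r i) x) :
    IsHermSelfDual F m
      (Submodule.span (Rq F m)
        (({Fin.append ![1, 0] x} : Set (Fin (2 + 2 * ℓ) → Rq F m)) ∪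
          Set.range fun i => Fin.append ![y i, c * y i] (r i))) := by
  subst hC₀span
  rw [isHermSelfDual_iff] at hC₀sd ⊢
  exact orthogonalBilin_span_buildUpGenerators (conjR_involutive F hm) hC₀sd hc hx
    fun i => neg_eq_iff_eq_neg.1 (hy i).symm

/-- Building-up construction, char 2 or `q ≡ 1 (mod 4)` case. -/
theorem statement2 (F : Type) [Field F] [Fintype F]
    (hq : ringChar F = 2 ∨ Fintype.card F % 4 = 1)
    (m : ℕ) (hm : 0 < m) (hcop : Nat.Coprime m (Fintype.card F))
    (ℓ k : ℕ) (r : Fin k → (Fin (2 * ℓ) → Rq F m))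
    (C₀ : Submodule (Rq F m) (Fin (2 * ℓ) → Rq F m))
    (hC₀span : C₀ = Submodule.span (Rq F m) (Set.range r))
    (hC₀sd : IsHermSelfDual F m C₀)
    (c : Rq F m) (hc : c * conjR F m c = -1)
    (x : Fin (2 * ℓ) → Rq F m) (hx : herm F m x x = -1)
    (y : Fin k → Rq F m) (hy : ∀ i, y i = - herm F m (r i) x) :
    IsHermSelfDual F m
      (Submodule.span (Rq F m)
        (({Fin.append ![1, 0] x} : Set (Fin (2 + 2 * ℓ) → Rq F m)) ∪
          Set.range fun i => Fin.append ![y i, c * y i] (r i))) :=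
  statement2_general F m hm ℓ k r C₀ hC₀span hC₀sd c hc x hx y hy
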